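/- If {a,b} is a two-element subset of {0} ∪ P and F is a unary polynomial of B(T), then either {F(a),F(b)} ⊆ {0} ∪ P or F(a) = F(b) (every polynomial image of a two-element subset of {0} ∪ P either remains in {0} ∪ P or is collapsed to a point). -/
import Mathlib


namespace Paper

/-- Direction of a Turing-machine head move. -/
inductive Dir : Type
  | L | R
deriving DecidableEq

/-- A Turing machine with states μ₀, μ₁, …, μ_k (μ₀ the halting state): for each state
μ_i with 1 ≤ i ≤ k and each tape symbol r, exactly one instruction μ_i r s D μ_m,
recorded as `instr i r = (s, D, m)`.  (The value of `instr` at `i = 0` is irrelevant: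
no instruction begins with μ₀.) -/
structure TM (k : ℕ) : Type where
  instr : Fin (k + 1) → Bool → Bool × Dir × Fin (k + 1)

/-- The universe of the algebra B(T):
`zero` = 0, `P j` = P_j, `one`,`two`,`H` the sequential elements U, and the machine
elements `C b i r s` = C_{ir}^s, `D b i r s` = D_{ir}^s, `M b i r` = M_i^r, where
`b = true` marks the barred copy V̄. -/
inductive BT (k : ℕ) : Type
  | zero : BT k
  | P : Fin 3 → BT k
  | one : BT k
  | two : BT k
  | H : BT k
  | C : Bool → Fin (k + 1) → Bool → Bool → BT k
  | D : Bool → Fin (k + 1) → Bool → Bool → BT k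
  | M : Bool → Fin (k + 1) → Bool → BT k
deriving DecidableEq

namespace BT

variable {k : ℕ}

/-- The partial order of B(T): x ≤ y iff x = 0, or x = y, or (x = P₂ and y ∈ {P₀,P₁}). -/
def le (x y : BT k) : Prop :=
  x = zero ∨ x = y ∨ (x = P 2 ∧ (y = P 0 ∨ y = P 1))

/-- x ∧ y: the greatest lower bound for `le`. -/
def meet (x y : BT k) : BT k :=
  if x = y then x
  else if x = P 2 ∧ (y = P 0 ∨ y = P 1) then P 2
  else if y = P 2 ∧ (x = P 0 ∨ x = P 1) then P 2
  else if (x = P 0 ∨ x = P 1) ∧ (y = P 0 ∨ y = P 1) then P 2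
  else zero

/-- membership in P = {P₀,P₁,P₂} -/
def isP : BT k → Bool
  | P _ => true
  | _ => false

/-- membership in U = {1,2,H} -/
def isU : BT k → Bool
  | one => true
  | two => true
  | H => true
  | _ => false

/-- membership in V ∪ V̄ -/
def isVV : BT k → Bool
  | C _ _ _ _ => true
  | D _ _ _ _ => true
  | M _ _ _ => true
  | _ => false

/-- membership in U ∪ V ∪ V̄ -/
def isUVV (x : BT k) : Bool := isU x || isVV x

/-- membership in V₀ = {C_{0r}^s, D_{0r}^s, M₀^r} (unbarred, state μ₀) -/
def isV0 : BT k → Bool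
  | C false i _ _ => i == 0
  | D false i _ _ => i == 0
  | M false i _ => i == 0
  | _ => false

/-- membership in V₁₀⁰ = {C₁₀⁰, M₁⁰, D₁₀⁰} -/
def isV10 (x : BT k) : Bool :=
  x == C false 1 false false || x == M false 1 false || x == D false 1 false false

/-- the bar involution on V ∪ V̄ (identity elsewhere) -/
def barOp : BT k → BT k
  | C b i r s => C (!b) i r s
  | D b i r s => D (!b) i r s
  | M b i r => M (!b) i r
  | x => x

/-- s₀ = C₁₀⁰, s₁ = M₁⁰, s₂ = D₁₀⁰ -/
def sel : Fin 3 → BT k := ![C false 1 false false, M false 1 false, D false 1 false false]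

/-- x ∧ⁱ y = x if x = y ∈ (P ∪ V₁₀⁰) \ {s_i}, else 0. -/
def meetI (i : Fin 3) (x y : BT k) : BT k :=
  if x = y ∧ (isP x ∨ isV10 x) ∧ x ≠ sel i then x else zero

/-- T₀(x) = P₂ if x ∈ {P₀,P₂}; P₀ if x = P₁; x if x ∈ V₀; else 0. -/
def T0 : BT k → BT k
  | P j => if j = 1 then P 0 else P 2
  | C false i r s => if i = 0 then C false i r s else zero
  | D false i r s => if i = 0 then D false i r s else zero
  | M false i r => if i = 0 then M false i r else zero
  | _ => zero

/-- T₁(x,y). -/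
def T1 (x y : BT k) : BT k :=
  if (x = P 0 ∧ y = P 0) ∨ (x = P 0 ∧ y = P 1) ∨ (x = P 1 ∧ y = P 0) ∨
     (x = P 0 ∧ y = P 2) ∨ (x = P 2 ∧ y = P 0) then P 1
  else if (x = P 1 ∨ x = P 2) ∧ (y = P 1 ∨ y = P 2) then P 2
  else if x = y ∧ isV10 x then x
  else zero

/-- J′(x,y,z) = x ∧ z if x = y or {x,y} ⊆ P; x if x = ȳ ∈ V ∪ V̄; else 0. -/
def J' (x y z : BT k) : BT k :=
  if x = y ∨ (isP x ∧ isP y) then meet x z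
  else if isVV y ∧ x = barOp y then x
  else zero

/-- the ternary discriminator: t(x,y,z) = z if x = y, else x. -/
def disc (x y z : BT k) : BT k := if x = y then z else x

/-- S₁(u,x,y,z). -/
def S1 (u x y z : BT k) : BT k :=
  if (u = one ∨ u = two) ∧ x = y ∧ y = z ∧ isUVV x then x
  else if isP x ∧ isP y ∧ isP z then disc x y z
  else zero

/-- S₂(u,v,x,y,z). -/
def S2 (u v x y z : BT k) : BT k :=
  if isVV v ∧ u = barOp v ∧ x = y ∧ y = z ∧ isVV x then x
  else if isP x ∧ isP y ∧ isP z then disc x y z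
  else zero

/-- L_{irt} for the instruction μ_i r s L μ_m (the barred clause is handled by carrying
the bar `b` of the argument through). -/
def Lop (i : Fin (k + 1)) (r s : Bool) (m : Fin (k + 1)) (t : Bool) :
    BT k → BT k → BT k → BT k := fun x y u =>
  match u with
  | P j => if x = one ∧ y = one then P j else zero
  | C b i' r' s' =>
      if x = one ∧ y = one ∧ i' = i ∧ r' = r then C b m t s'
      else if x = H ∧ y = one ∧ i' = i ∧ r' = r ∧ s' = t then M b m t
      else zero
  | M b i' r' => if x = two ∧ y = H ∧ i' = i ∧ r' = r then D b m t s else zero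
  | D b i' r' s' => if x = two ∧ y = two ∧ i' = i ∧ r' = r then D b m t s' else zero
  | _ => zero

/-- R_{irt} for the instruction μ_i r s R μ_m. -/
def Rop (i : Fin (k + 1)) (r s : Bool) (m : Fin (k + 1)) (t : Bool) :
    BT k → BT k → BT k → BT k := fun x y u =>
  match u with
  | P j => if x = one ∧ y = one then P j else zero
  | C b i' r' s' => if x = one ∧ y = one ∧ i' = i ∧ r' = r then C b m t s' else zero
  | M b i' r' => if x = H ∧ y = one ∧ i' = i ∧ r' = r then C b m t s else zero
  | D b i' r' s' =>
      if x = two ∧ y = H ∧ i' = i ∧ r' = r ∧ s' = t then M b m t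
      else if x = two ∧ y = two ∧ i' = i ∧ r' = r then D b m t s'
      else zero
  | _ => zero

end BT

/-- The forward machine operation determined by the unique instruction of T beginning
with μ_i r (for 1 ≤ i ≤ k) and the symbol t. -/
def fwd {k : ℕ} (T : TM k) (i : Fin (k + 1)) (r t : Bool) :
    BT k → BT k → BT k → BT k :=
  match T.instr i r with
  | (s, Dir.L, m) => BT.Lop i r s m t
  | (s, Dir.R, m) => BT.Rop i r s m t

/-- the reverse of a machine operation: F°(x,y,u) = v when F(x,y,v) = u ≠ 0, else 0. -/
noncomputable def revOp {k : ℕ} (F : BT k → BT k → BT k → BT k) (x y u : BT k) : BT k :=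
  haveI := Classical.propDecidable (u ≠ BT.zero ∧ ∃ v, F x y v = u)
  if h : u ≠ BT.zero ∧ ∃ v, F x y v = u then h.2.choose else BT.zero

/-- The machine operations ℳ: `b = false` gives the forward operation, `b = true` the
reverse operation. -/
noncomputable def mop {k : ℕ} (T : TM k) (i : Fin (k + 1)) (r t : Bool) (b : Bool) :
    BT k → BT k → BT k → BT k :=
  match b with
  | false => fwd T i r t
  | true => revOp (fwd T i r t)

/-- The relation ≺ on U: 2≺2, 2≺H, H≺1, 1≺1. -/
def prec {k : ℕ} : BT k → BT k → Bool
  | BT.two, BT.two => true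
  | BT.two, BT.H => true
  | BT.H, BT.one => true
  | BT.one, BT.one => true
  | _, _ => false

/-- U_i¹ built from the machine operation F. -/
def U1op {k : ℕ} (F : BT k → BT k → BT k → BT k) (x y z u : BT k) : BT k :=
  if prec x y ∧ prec x z ∧ y ≠ z ∧ BT.isVV (F x y u) then BT.barOp (F x y u)
  else if prec x y ∧ y = z then F x y u
  else BT.zero

/-- U_i² built from the machine operation F. -/
def U2op {k : ℕ} (F : BT k → BT k → BT k → BT k) (x y z u : BT k) : BT k :=
  if prec x z ∧ prec y z ∧ x ≠ y ∧ BT.isVV (F y z u) then BT.barOp (F y z u)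
  else if x = y ∧ prec y z then F y z u
  else BT.zero

/-- The n-ary polynomials of the algebra B(T): functions obtained by composing the basic
operations (the constant 0, T₀, T₁, ∧, ∧⁰, ∧¹, ∧², J′, S₁, S₂, the forward and reverse
machine operations, and the U_i¹, U_i²), coordinate projections and constants. -/
inductive PolyB {k : ℕ} (T : TM k) : {n : ℕ} → ((Fin n → BT k) → BT k) → Prop where
  | proj {n : ℕ} (i : Fin n) : PolyB T fun v => v i
  | const {n : ℕ} (c : BT k) : PolyB T fun _ : Fin n → BT k => c
  | t0 {n : ℕ} {p : (Fin n → BT k) → BT k} :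
      PolyB T p → PolyB T fun v => BT.T0 (p v)
  | t1 {n : ℕ} {p q : (Fin n → BT k) → BT k} :
      PolyB T p → PolyB T q → PolyB T fun v => BT.T1 (p v) (q v)
  | meet {n : ℕ} {p q : (Fin n → BT k) → BT k} :
      PolyB T p → PolyB T q → PolyB T fun v => BT.meet (p v) (q v)
  | meetI (j : Fin 3) {n : ℕ} {p q : (Fin n → BT k) → BT k} :
      PolyB T p → PolyB T q → PolyB T fun v => BT.meetI j (p v) (q v)
  | jop {n : ℕ} {p q r : (Fin n → BT k) → BT k} :
      PolyB T p → PolyB T q → PolyB T r → PolyB T fun v => BT.J' (p v) (q v) (r v)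
  | s1 {n : ℕ} {p q r s : (Fin n → BT k) → BT k} :
      PolyB T p → PolyB T q → PolyB T r → PolyB T s →
      PolyB T fun v => BT.S1 (p v) (q v) (r v) (s v)
  | s2 {n : ℕ} {p q r s w : (Fin n → BT k) → BT k} :
      PolyB T p → PolyB T q → PolyB T r → PolyB T s → PolyB T w →
      PolyB T fun v => BT.S2 (p v) (q v) (r v) (s v) (w v)
  | mach (i : Fin (k + 1)) (hi : i ≠ 0) (r t b : Bool) {n : ℕ}
      {p q u : (Fin n → BT k) → BT k} :
      PolyB T p → PolyB T q → PolyB T u →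
      PolyB T fun v => mop T i r t b (p v) (q v) (u v)
  | u1 (i : Fin (k + 1)) (hi : i ≠ 0) (r t b : Bool) {n : ℕ}
      {p q r' s : (Fin n → BT k) → BT k} :
      PolyB T p → PolyB T q → PolyB T r' → PolyB T s →
      PolyB T fun v => U1op (mop T i r t b) (p v) (q v) (r' v) (s v)
  | u2 (i : Fin (k + 1)) (hi : i ≠ 0) (r t b : Bool) {n : ℕ}
      {p q r' s : (Fin n → BT k) → BT k} :
      PolyB T p → PolyB T q → PolyB T r' → PolyB T s →
      PolyB T fun v => U2op (mop T i r t b) (p v) (q v) (r' v) (s v)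

/-- unary polynomials of B(T) -/
def UPolyB {k : ℕ} (T : TM k) (F : BT k → BT k) : Prop :=
  PolyB T (n := 1) fun v => F (v 0)

/-- binary polynomials of B(T) -/
def BPolyB {k : ℕ} (T : TM k) (F : BT k → BT k → BT k) : Prop :=
  PolyB T (n := 2) fun v => F (v 0) (v 1)


section Aux

variable {k : ℕ}

/-- membership in {0} ∪ P -/
def QP (x : BT k) : Prop := x = BT.zero ∨ BT.isP x

/-- the key equivalence relation: equal, or both in {0} ∪ P. -/
def Rel (x y : BT k) : Prop := x = y ∨ (QP x ∧ QP y)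

lemma QP_zero : QP (BT.zero : BT k) := Or.inl rfl

lemma QP_P (j : Fin 3) : QP (BT.P j : BT k) := Or.inr rfl

lemma Q_elim {x : BT k} (h : QP x) : x = BT.zero ∨ ∃ j, x = BT.P j := by
  rcases h with h | h
  · exact Or.inl h
  · cases x <;> simp [BT.isP] at h
    exact Or.inr ⟨_, rfl⟩

lemma not_isVV_of_Q {x : BT k} (h : QP x) : BT.isVV x = false := by
  rcases Q_elim h with rfl | ⟨j, rfl⟩ <;> rfl

lemma not_isUVV_of_Q {x : BT k} (h : QP x) : BT.isUVV x = false := by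
  rcases Q_elim h with rfl | ⟨j, rfl⟩ <;> rfl

lemma isVV_barOp {x : BT k} (h : BT.isVV x = true) : BT.isVV (BT.barOp x) = true := by
  cases x <;> simp [BT.isVV, BT.barOp] at h ⊢

lemma disc_Q {x y z : BT k} (hx : BT.isP x) (hy : BT.isP y) (hz : BT.isP z) :
    QP (BT.disc x y z) := by
  unfold BT.disc; split_ifs
  · exact Or.inr hz
  · exact Or.inr hx

lemma relRefl {x : BT k} : Rel x x := Or.inl rfl

/- compatibility combinators for operations all of whose coordinates are "A-type":
an argument in Q forces the output into Q. -/

lemma compat1 {G : BT k → BT k} (h1 : ∀ x, QP x → QP (G x))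
    {x x'} (hx : Rel x x') : Rel (G x) (G x') := by
  rcases hx with rfl | ⟨a1, a2⟩
  · exact Or.inl rfl
  · exact Or.inr ⟨h1 _ a1, h1 _ a2⟩

lemma compat2 {G : BT k → BT k → BT k}
    (h1 : ∀ x y, QP x → QP (G x y)) (h2 : ∀ x y, QP y → QP (G x y))
    {x x' y y'} (hx : Rel x x') (hy : Rel y y') : Rel (G x y) (G x' y') := by
  rcases hx with rfl | ⟨a1, a2⟩
  · rcases hy with rfl | ⟨b1, b2⟩
    · exact Or.inl rfl
    · exact Or.inr ⟨h2 _ _ b1, h2 _ _ b2⟩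
  · exact Or.inr ⟨h1 _ _ a1, h1 _ _ a2⟩

lemma compat3 {G : BT k → BT k → BT k → BT k}
    (h1 : ∀ x y z, QP x → QP (G x y z)) (h2 : ∀ x y z, QP y → QP (G x y z))
    (h3 : ∀ x y z, QP z → QP (G x y z))
    {x x' y y' z z'} (hx : Rel x x') (hy : Rel y y') (hz : Rel z z') :
    Rel (G x y z) (G x' y' z') := by
  rcases hx with rfl | ⟨a1, a2⟩
  · rcases hy with rfl | ⟨b1, b2⟩
    · rcases hz with rfl | ⟨c1, c2⟩
      · exact Or.inl rfl
      · exact Or.inr ⟨h3 _ _ _ c1, h3 _ _ _ c2⟩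
    · exact Or.inr ⟨h2 _ _ _ b1, h2 _ _ _ b2⟩
  · exact Or.inr ⟨h1 _ _ _ a1, h1 _ _ _ a2⟩

lemma compat4 {G : BT k → BT k → BT k → BT k → BT k}
    (h1 : ∀ x y z u, QP x → QP (G x y z u)) (h2 : ∀ x y z u, QP y → QP (G x y z u))
    (h3 : ∀ x y z u, QP z → QP (G x y z u)) (h4 : ∀ x y z u, QP u → QP (G x y z u))
    {x x' y y' z z' u u'} (hx : Rel x x') (hy : Rel y y') (hz : Rel z z') (hu : Rel u u') :
    Rel (G x y z u) (G x' y' z' u') := by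
  rcases hx with rfl | ⟨a1, a2⟩
  · rcases hy with rfl | ⟨b1, b2⟩
    · rcases hz with rfl | ⟨c1, c2⟩
      · rcases hu with rfl | ⟨d1, d2⟩
        · exact Or.inl rfl
        · exact Or.inr ⟨h4 _ _ _ _ d1, h4 _ _ _ _ d2⟩
      · exact Or.inr ⟨h3 _ _ _ _ c1, h3 _ _ _ _ c2⟩
    · exact Or.inr ⟨h2 _ _ _ _ b1, h2 _ _ _ _ b2⟩
  · exact Or.inr ⟨h1 _ _ _ _ a1, h1 _ _ _ _ a2⟩

lemma compat5 {G : BT k → BT k → BT k → BT k → BT k → BT k}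
    (h1 : ∀ x y z u w, QP x → QP (G x y z u w)) (h2 : ∀ x y z u w, QP y → QP (G x y z u w))
    (h3 : ∀ x y z u w, QP z → QP (G x y z u w)) (h4 : ∀ x y z u w, QP u → QP (G x y z u w))
    (h5 : ∀ x y z u w, QP w → QP (G x y z u w))
    {x x' y y' z z' u u' w w'} (hx : Rel x x') (hy : Rel y y') (hz : Rel z z')
    (hu : Rel u u') (hw : Rel w w') :
    Rel (G x y z u w) (G x' y' z' u' w') := by
  rcases hx with rfl | ⟨a1, a2⟩
  · rcases hy with rfl | ⟨b1, b2⟩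
    · rcases hz with rfl | ⟨c1, c2⟩
      · rcases hu with rfl | ⟨d1, d2⟩
        · rcases hw with rfl | ⟨e1, e2⟩
          · exact Or.inl rfl
          · exact Or.inr ⟨h5 _ _ _ _ _ e1, h5 _ _ _ _ _ e2⟩
        · exact Or.inr ⟨h4 _ _ _ _ _ d1, h4 _ _ _ _ _ d2⟩
      · exact Or.inr ⟨h3 _ _ _ _ _ c1, h3 _ _ _ _ _ c2⟩
    · exact Or.inr ⟨h2 _ _ _ _ _ b1, h2 _ _ _ _ _ b2⟩
  · exact Or.inr ⟨h1 _ _ _ _ _ a1, h1 _ _ _ _ _ a2⟩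

/- A-lemmas for each basic operation. -/

lemma T0_A {x : BT k} (h : QP x) : QP (BT.T0 x) := by
  rcases Q_elim h with rfl | ⟨j, rfl⟩
  · exact Or.inl rfl
  · simp only [BT.T0]; split_ifs <;> exact Or.inr rfl

lemma T1_A1 {x : BT k} (y : BT k) (h : QP x) : QP (BT.T1 x y) := by
  have hv : BT.isV10 x = false := by
    rcases Q_elim h with rfl | ⟨j, rfl⟩ <;> rfl
  unfold BT.T1
  split_ifs with h1 h2 h3
  · exact Or.inr rfl
  · exact Or.inr rfl
  · exact absurd h3.2 (by simp [hv])
  · exact Or.inl rfl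

lemma T1_A2 {y : BT k} (x : BT k) (h : QP y) : QP (BT.T1 x y) := by
  have hv : BT.isV10 y = false := by
    rcases Q_elim h with rfl | ⟨j, rfl⟩ <;> rfl
  unfold BT.T1
  split_ifs with h1 h2 h3
  · exact Or.inr rfl
  · exact Or.inr rfl
  · exact absurd h3.2 (by rw [h3.1]; simp [hv])
  · exact Or.inl rfl

lemma meet_A1 {x : BT k} (y : BT k) (h : QP x) : QP (BT.meet x y) := by
  unfold BT.meet
  split_ifs
  · exact h
  · exact Or.inr rfl
  · exact Or.inr rfl
  · exact Or.inr rfl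
  · exact Or.inl rfl

lemma meet_A2 {y : BT k} (x : BT k) (h : QP y) : QP (BT.meet x y) := by
  unfold BT.meet
  split_ifs with h1
  · exact h1 ▸ h
  · exact Or.inr rfl
  · exact Or.inr rfl
  · exact Or.inr rfl
  · exact Or.inl rfl

lemma meetI_A1 {x : BT k} (i : Fin 3) (y : BT k) (h : QP x) : QP (BT.meetI i x y) := by
  unfold BT.meetI; split_ifs
  · exact h
  · exact Or.inl rfl

lemma meetI_A2 {y : BT k} (i : Fin 3) (x : BT k) (h : QP y) : QP (BT.meetI i x y) := by
  unfold BT.meetI; split_ifs with h1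
  · exact h1.1 ▸ h
  · exact Or.inl rfl

lemma J'_A1 {x : BT k} (y z : BT k) (h : QP x) : QP (BT.J' x y z) := by
  unfold BT.J'; split_ifs
  · exact meet_A1 z h
  · exact h
  · exact Or.inl rfl

lemma J'_A2 {y : BT k} (x z : BT k) (h : QP y) : QP (BT.J' x y z) := by
  unfold BT.J'; split_ifs with h1 h2
  · rcases h1 with rfl | ⟨hx, hy⟩
    · exact meet_A1 z h
    · exact meet_A1 z (Or.inr hx)
  · exact absurd h2.1 (by simp [not_isVV_of_Q h])
  · exact Or.inl rfl

lemma J'_z {x y : BT k} {z z' : BT k} (hz : Rel z z') :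
    Rel (BT.J' x y z) (BT.J' x y z') := by
  unfold BT.J'
  split_ifs with h1 h2
  · exact compat2 (fun a b ha => meet_A1 b ha) (fun a b hb => meet_A2 a hb) relRefl hz
  · exact Or.inl rfl
  · exact Or.inl rfl

lemma S1_Au {u : BT k} (x y z : BT k) (h : QP u) : QP (BT.S1 u x y z) := by
  have hu : ¬(u = BT.one ∨ u = BT.two) := by
    rcases Q_elim h with rfl | ⟨j, rfl⟩ <;> simp
  unfold BT.S1
  rw [if_neg (fun hc => hu hc.1)]
  split_ifs with h2
  · exact disc_Q h2.1 h2.2.1 h2.2.2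
  · exact Or.inl rfl

lemma S1_Ax {x : BT k} (u y z : BT k) (h : QP x) : QP (BT.S1 u x y z) := by
  unfold BT.S1
  rw [if_neg (fun hc => by simp [not_isUVV_of_Q h] at hc)]
  split_ifs with h2
  · exact disc_Q h2.1 h2.2.1 h2.2.2
  · exact Or.inl rfl

lemma S1_Ay {y : BT k} (u x z : BT k) (h : QP y) : QP (BT.S1 u x y z) := by
  unfold BT.S1
  rw [if_neg (fun hc => by
    have : QP x := hc.2.1 ▸ h
    simp [not_isUVV_of_Q this] at hc)]
  split_ifs with h2
  · exact disc_Q h2.1 h2.2.1 h2.2.2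
  · exact Or.inl rfl

lemma S1_Az {z : BT k} (u x y : BT k) (h : QP z) : QP (BT.S1 u x y z) := by
  unfold BT.S1
  rw [if_neg (fun hc => by
    have : QP x := (hc.2.1.trans hc.2.2.1) ▸ h
    simp [not_isUVV_of_Q this] at hc)]
  split_ifs with h2
  · exact disc_Q h2.1 h2.2.1 h2.2.2
  · exact Or.inl rfl

lemma S2_Au {u : BT k} (v x y z : BT k) (h : QP u) : QP (BT.S2 u v x y z) := by
  unfold BT.S2
  rw [if_neg (fun hc => by
    have : BT.isVV u = true := hc.2.1 ▸ isVV_barOp hc.1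
    simp [not_isVV_of_Q h] at this)]
  split_ifs with h2
  · exact disc_Q h2.1 h2.2.1 h2.2.2
  · exact Or.inl rfl

lemma S2_Av {v : BT k} (u x y z : BT k) (h : QP v) : QP (BT.S2 u v x y z) := by
  unfold BT.S2
  rw [if_neg (fun hc => by simp [not_isVV_of_Q h] at hc)]
  split_ifs with h2
  · exact disc_Q h2.1 h2.2.1 h2.2.2
  · exact Or.inl rfl

lemma S2_Ax {x : BT k} (u v y z : BT k) (h : QP x) : QP (BT.S2 u v x y z) := by
  unfold BT.S2
  rw [if_neg (fun hc => by simp [not_isVV_of_Q h] at hc)]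
  split_ifs with h2
  · exact disc_Q h2.1 h2.2.1 h2.2.2
  · exact Or.inl rfl

lemma S2_Ay {y : BT k} (u v x z : BT k) (h : QP y) : QP (BT.S2 u v x y z) := by
  unfold BT.S2
  rw [if_neg (fun hc => by
    have : QP x := hc.2.2.1 ▸ h
    simp [not_isVV_of_Q this] at hc)]
  split_ifs with h2
  · exact disc_Q h2.1 h2.2.1 h2.2.2
  · exact Or.inl rfl

lemma S2_Az {z : BT k} (u v x y : BT k) (h : QP z) : QP (BT.S2 u v x y z) := by
  unfold BT.S2
  rw [if_neg (fun hc => by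
    have : QP x := (hc.2.2.1.trans hc.2.2.2.1) ▸ h
    simp [not_isVV_of_Q this] at hc)]
  split_ifs with h2
  · exact disc_Q h2.1 h2.2.1 h2.2.2
  · exact Or.inl rfl

end Aux
section Aux2

variable {k : ℕ}

lemma Lop_x {i : Fin (k+1)} {r s : Bool} {m : Fin (k+1)} {t : Bool} {x : BT k}
    (y u : BT k) (h : QP x) : BT.Lop i r s m t x y u = BT.zero := by
  rcases Q_elim h with rfl | ⟨j, rfl⟩ <;> cases u <;> simp [BT.Lop]

lemma Lop_y {i : Fin (k+1)} {r s : Bool} {m : Fin (k+1)} {t : Bool} {y : BT k}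
    (x u : BT k) (h : QP y) : BT.Lop i r s m t x y u = BT.zero := by
  rcases Q_elim h with rfl | ⟨j, rfl⟩ <;> cases u <;> simp [BT.Lop]

lemma Lop_u {i : Fin (k+1)} {r s : Bool} {m : Fin (k+1)} {t : Bool} {u : BT k}
    (x y : BT k) (h : QP u) : QP (BT.Lop i r s m t x y u) := by
  rcases Q_elim h with rfl | ⟨j, rfl⟩
  · exact Or.inl rfl
  · simp only [BT.Lop]; split_ifs
    · exact Or.inr rfl
    · exact Or.inl rfl

lemma Lop_P {i : Fin (k+1)} {r s : Bool} {m : Fin (k+1)} {t : Bool} {x y u : BT k}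
    {j : Fin 3} (h : BT.Lop i r s m t x y u = BT.P j) : u = BT.P j := by
  cases u <;> simp only [BT.Lop] at h <;> first
    | (split_ifs at h <;> simp_all)
    | simp_all

lemma Rop_x {i : Fin (k+1)} {r s : Bool} {m : Fin (k+1)} {t : Bool} {x : BT k}
    (y u : BT k) (h : QP x) : BT.Rop i r s m t x y u = BT.zero := by
  rcases Q_elim h with rfl | ⟨j, rfl⟩ <;> cases u <;> simp [BT.Rop]

lemma Rop_y {i : Fin (k+1)} {r s : Bool} {m : Fin (k+1)} {t : Bool} {y : BT k}
    (x u : BT k) (h : QP y) : BT.Rop i r s m t x y u = BT.zero := by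
  rcases Q_elim h with rfl | ⟨j, rfl⟩ <;> cases u <;> simp [BT.Rop]

lemma Rop_u {i : Fin (k+1)} {r s : Bool} {m : Fin (k+1)} {t : Bool} {u : BT k}
    (x y : BT k) (h : QP u) : QP (BT.Rop i r s m t x y u) := by
  rcases Q_elim h with rfl | ⟨j, rfl⟩
  · exact Or.inl rfl
  · simp only [BT.Rop]; split_ifs
    · exact Or.inr rfl
    · exact Or.inl rfl

lemma Rop_P {i : Fin (k+1)} {r s : Bool} {m : Fin (k+1)} {t : Bool} {x y u : BT k}
    {j : Fin 3} (h : BT.Rop i r s m t x y u = BT.P j) : u = BT.P j := by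
  cases u <;> simp only [BT.Rop] at h <;> first
    | (split_ifs at h <;> simp_all)
    | simp_all

lemma fwd_x {T : TM k} {i : Fin (k+1)} {r t : Bool} {x : BT k} (y u : BT k)
    (h : QP x) : fwd T i r t x y u = BT.zero := by
  unfold fwd
  rcases hE : T.instr i r with ⟨s, d, m⟩
  cases d
  · exact Lop_x y u h
  · exact Rop_x y u h

lemma fwd_y {T : TM k} {i : Fin (k+1)} {r t : Bool} {y : BT k} (x u : BT k)
    (h : QP y) : fwd T i r t x y u = BT.zero := by
  unfold fwd
  rcases hE : T.instr i r with ⟨s, d, m⟩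
  cases d
  · exact Lop_y x u h
  · exact Rop_y x u h

lemma fwd_u {T : TM k} {i : Fin (k+1)} {r t : Bool} {u : BT k} (x y : BT k)
    (h : QP u) : QP (fwd T i r t x y u) := by
  unfold fwd
  rcases hE : T.instr i r with ⟨s, d, m⟩
  cases d
  · exact Lop_u x y h
  · exact Rop_u x y h

lemma fwd_P {T : TM k} {i : Fin (k+1)} {r t : Bool} {x y u : BT k} {j : Fin 3}
    (h : fwd T i r t x y u = BT.P j) : u = BT.P j := by
  unfold fwd at h
  revert h
  rcases T.instr i r with ⟨s, d, m⟩
  cases d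
  · exact fun h => Lop_P h
  · exact fun h => Rop_P h

lemma revOp_zero {F : BT k → BT k → BT k → BT k} {x y : BT k} (u : BT k)
    (hF : ∀ v, F x y v = BT.zero) : revOp F x y u = BT.zero := by
  unfold revOp
  split
  · next h => exact absurd (h.2.choose_spec.symm.trans (hF _)) h.1
  · rfl

lemma revOp_u {F : BT k → BT k → BT k → BT k} {x y u : BT k}
    (hP : ∀ v (j : Fin 3), F x y v = BT.P j → v = BT.P j) (h : QP u) :
    QP (revOp F x y u) := by
  rcases Q_elim h with rfl | ⟨j, rfl⟩
  · unfold revOp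
    split
    · next h' => exact absurd rfl h'.1
    · exact Or.inl rfl
  · unfold revOp
    split
    · next h' =>
        rw [hP _ _ h'.2.choose_spec]
        exact Or.inr rfl
    · exact Or.inl rfl

lemma mop_x {T : TM k} {i : Fin (k+1)} {r t b : Bool} {x : BT k} (y u : BT k)
    (h : QP x) : mop T i r t b x y u = BT.zero := by
  cases b
  · exact fwd_x y u h
  · exact revOp_zero u (fun v => fwd_x y v h)

lemma mop_y {T : TM k} {i : Fin (k+1)} {r t b : Bool} {y : BT k} (x u : BT k)
    (h : QP y) : mop T i r t b x y u = BT.zero := by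
  cases b
  · exact fwd_y x u h
  · exact revOp_zero u (fun v => fwd_y x v h)

lemma mop_u {T : TM k} {i : Fin (k+1)} {r t b : Bool} {u : BT k} (x y : BT k)
    (h : QP u) : QP (mop T i r t b x y u) := by
  cases b
  · exact fwd_u x y h
  · exact revOp_u (fun v j hv => fwd_P hv) h

lemma prec_left {x : BT k} (y : BT k) (h : QP x) : prec x y = false := by
  rcases Q_elim h with rfl | ⟨j, rfl⟩ <;> cases y <;> rfl

lemma prec_right {y : BT k} (x : BT k) (h : QP y) : prec x y = false := by
  rcases Q_elim h with rfl | ⟨j, rfl⟩ <;> cases x <;> rfl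

lemma U1_x {F : BT k → BT k → BT k → BT k} {x : BT k} (y z u : BT k) (h : QP x) :
    U1op F x y z u = BT.zero := by
  unfold U1op
  rw [if_neg (fun hc => by simp [prec_left y h] at hc),
      if_neg (fun hc => by simp [prec_left y h] at hc)]

lemma U1_y {F : BT k → BT k → BT k → BT k} {y : BT k} (x z u : BT k) (h : QP y) :
    U1op F x y z u = BT.zero := by
  unfold U1op
  rw [if_neg (fun hc => by simp [prec_right x h] at hc),
      if_neg (fun hc => by simp [prec_right x h] at hc)]

lemma U1_z {F : BT k → BT k → BT k → BT k} {z : BT k} (x y u : BT k) (h : QP z) :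
    U1op F x y z u = BT.zero := by
  unfold U1op
  rw [if_neg (fun hc => by simp [prec_right x h] at hc),
      if_neg (fun hc => by
        obtain ⟨h1, h2⟩ := hc
        rw [h2] at h1
        simp [prec_right x h] at h1)]

lemma U1_u {F : BT k → BT k → BT k → BT k} {u : BT k} (x y z : BT k)
    (hF : ∀ v, QP v → QP (F x y v)) (h : QP u) : QP (U1op F x y z u) := by
  unfold U1op
  split_ifs with h1 h2
  · exact absurd h1.2.2.2 (by simp [not_isVV_of_Q (hF u h)])
  · exact hF u h
  · exact Or.inl rfl

lemma U2_x {F : BT k → BT k → BT k → BT k} {x : BT k} (y z u : BT k) (h : QP x) :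
    U2op F x y z u = BT.zero := by
  unfold U2op
  rw [if_neg (fun hc => by simp [prec_left z h] at hc),
      if_neg (fun hc => by
        obtain ⟨h1, h2⟩ := hc
        rw [← h1] at h2
        simp [prec_left z h] at h2)]

lemma U2_y {F : BT k → BT k → BT k → BT k} {y : BT k} (x z u : BT k) (h : QP y) :
    U2op F x y z u = BT.zero := by
  unfold U2op
  rw [if_neg (fun hc => by simp [prec_left z h] at hc),
      if_neg (fun hc => by simp [prec_left z h] at hc)]

lemma U2_z {F : BT k → BT k → BT k → BT k} {z : BT k} (x y u : BT k) (h : QP z) :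
    U2op F x y z u = BT.zero := by
  unfold U2op
  rw [if_neg (fun hc => by simp [prec_right x h] at hc),
      if_neg (fun hc => by simp [prec_right y h] at hc)]

lemma U2_u {F : BT k → BT k → BT k → BT k} {u : BT k} (x y z : BT k)
    (hF : ∀ w v, QP v → QP (F w z v)) (h : QP u) : QP (U2op F x y z u) := by
  unfold U2op
  split_ifs with h1 h2
  · exact absurd h1.2.2.2 (by simp [not_isVV_of_Q (hF y u h)])
  · exact hF y u h
  · exact Or.inl rfl

end Aux2
/-- Main lemma: every polynomial of B(T) preserves the relation `Rel`. -/
lemma poly_preserves_Rel {k : ℕ} {T : TM k} {n : ℕ} {p : (Fin n → BT k) → BT k}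
    (hp : PolyB T p) :
    ∀ v w : Fin n → BT k, (∀ i, Rel (v i) (w i)) → Rel (p v) (p w) := by
  induction hp with
  | proj i => exact fun v w h => h i
  | const c => exact fun v w h => Or.inl rfl
  | t0 hp ih =>
    exact fun v w h => compat1 (fun x hx => T0_A hx) (ih v w h)
  | t1 hp hq ihp ihq =>
    exact fun v w h =>
      compat2 (fun x y hx => T1_A1 y hx) (fun x y hy => T1_A2 x hy)
        (ihp v w h) (ihq v w h)
  | meet hp hq ihp ihq =>
    exact fun v w h =>
      compat2 (fun x y hx => meet_A1 y hx) (fun x y hy => meet_A2 x hy)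
        (ihp v w h) (ihq v w h)
  | meetI j hp hq ihp ihq =>
    exact fun v w h =>
      compat2 (fun x y hx => meetI_A1 j y hx) (fun x y hy => meetI_A2 j x hy)
        (ihp v w h) (ihq v w h)
  | jop hp hq hr ihp ihq ihr =>
    intro v w h
    rcases ihp v w h with hpe | ⟨a1, a2⟩
    · rcases ihq v w h with hqe | ⟨b1, b2⟩
      · beta_reduce; rw [hpe, hqe]; exact J'_z (ihr v w h)
      · exact Or.inr ⟨J'_A2 _ _ b1, J'_A2 _ _ b2⟩
    · exact Or.inr ⟨J'_A1 _ _ a1, J'_A1 _ _ a2⟩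
  | s1 hp hq hr hs ihp ihq ihr ihs =>
    exact fun v w h =>
      compat4 (fun u x y z hu => S1_Au x y z hu) (fun u x y z hx => S1_Ax u y z hx)
        (fun u x y z hy => S1_Ay u x z hy) (fun u x y z hz => S1_Az u x y hz)
        (ihp v w h) (ihq v w h) (ihr v w h) (ihs v w h)
  | s2 hp hq hr hs hw ihp ihq ihr ihs ihw =>
    exact fun v w h =>
      compat5 (fun u a x y z hu => S2_Au a x y z hu) (fun u a x y z ha => S2_Av u x y z ha)
        (fun u a x y z hx => S2_Ax u a y z hx) (fun u a x y z hy => S2_Ay u a x z hy)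
        (fun u a x y z hz => S2_Az u a x y hz)
        (ihp v w h) (ihq v w h) (ihr v w h) (ihs v w h) (ihw v w h)
  | mach i hi r t b hp hq hu ihp ihq ihu =>
    exact fun v w h =>
      compat3 (fun x y u hx => (mop_x y u hx) ▸ QP_zero)
        (fun x y u hy => (mop_y x u hy) ▸ QP_zero)
        (fun x y u hu => mop_u x y hu)
        (ihp v w h) (ihq v w h) (ihu v w h)
  | u1 i hi r t b hp hq hr ihs ihp ihq ihr ihu =>
    exact fun v w h =>
      compat4 (fun x y z u hx => (U1_x y z u hx) ▸ QP_zero)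
        (fun x y z u hy => (U1_y x z u hy) ▸ QP_zero)
        (fun x y z u hz => (U1_z x y u hz) ▸ QP_zero)
        (fun x y z u hu => U1_u x y z (fun a ha => mop_u x y ha) hu)
        (ihp v w h) (ihq v w h) (ihr v w h) (ihu v w h)
  | u2 i hi r t b hp hq hr ihs ihp ihq ihr ihu =>
    exact fun v w h =>
      compat4 (fun x y z u hx => (U2_x y z u hx) ▸ QP_zero)
        (fun x y z u hy => (U2_y x z u hy) ▸ QP_zero)
        (fun x y z u hz => (U2_z x y u hz) ▸ QP_zero)
        (fun x y z u hu => U2_u x y z (fun a c hc => mop_u a z hc) hu)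
        (ihp v w h) (ihq v w h) (ihr v w h) (ihu v w h)
/-- every polynomial image of a two-element subset of {0} ∪ P either remains
in {0} ∪ P or is collapsed to a point. -/
theorem statement9 {k : ℕ} (hk : 0 < k) (T : TM k) (a b : BT k)
    (hab : a ≠ b)
    (ha : a = BT.zero ∨ BT.isP a) (hb : b = BT.zero ∨ BT.isP b)
    (F : BT k → BT k) (hF : UPolyB T F) :
    ((F a = BT.zero ∨ BT.isP (F a)) ∧ (F b = BT.zero ∨ BT.isP (F b))) ∨ F a = F b := by
  have hRel : Rel a b := Or.inr ⟨ha, hb⟩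
  have hmain := poly_preserves_Rel hF (fun _ => a) (fun _ => b) (fun _ => hRel)
  rcases hmain with h | ⟨h1, h2⟩
  · exact Or.inr h
  · exact Or.inl ⟨h1, h2⟩

end Paper
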